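/- Let (X, d) be a cone metric space over a real Banach space E whose cone P is normal with normal constant k, and assume additionally the condition (*): for all p, c ∈ E with c ∈ P, if p ≤ c and −p ≤ c then ‖p‖ ≤ k‖c‖. Let r ∈ E with 0 ≪ r. If (x_n) and (y_n) are two (r/(2k²))-Cauchy sequences in X, then the real-valued data (d(x_n, y_n)) is ‖r‖-Cauchy in norm; that is, for every real ε > 0 there exists m ∈ ℕ such that ‖d(x_i, y_i) − d(x_j, y_j)‖ < ‖r‖ + ε for all i, j ≥ m. -/

import Mathlib

/-- `P` is a cone in the real Banach space `E`: it is closed, nonempty, not reduced to `{0}`,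
closed under nonnegative real combinations, and satisfies `x ∈ P → -x ∈ P → x = 0`. -/
structure IsCone {E : Type*} [NormedAddCommGroup E] [NormedSpace ℝ E] (P : Set E) : Prop where
  closed : IsClosed P
  nonempty : P.Nonempty
  ne_singleton_zero : P ≠ {0}
  comb_mem : ∀ a b : ℝ, 0 ≤ a → 0 ≤ b → ∀ x y : E, x ∈ P → y ∈ P → a • x + b • y ∈ P
  eq_zero_of_mem_of_neg_mem : ∀ x : E, x ∈ P → -x ∈ P → x = 0

/-- `d : X × X → E` is a cone metric on `X` with respect to the cone `P`, where the partial
order on `E` is `x ≤ y ↔ y - x ∈ P`. -/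
structure IsConeMetric {E : Type*} [NormedAddCommGroup E] [NormedSpace ℝ E]
    (P : Set E) {X : Type*} (d : X → X → E) : Prop where
  /-- `0 ≤ d x y`, i.e. `d x y - 0 ∈ P`. -/
  nonneg : ∀ x y : X, d x y ∈ P
  eq_zero_iff : ∀ x y : X, d x y = 0 ↔ x = y
  symm : ∀ x y : X, d x y = d y x
  /-- `d x y ≤ d x z + d z y`, i.e. `(d x z + d z y) - d x y ∈ P`. -/
  triangle : ∀ x y z : X, (d x z + d z y) - d x y ∈ P

/-- The sequence `x` in the cone metric space `(X, d)` is `r`-convergent to `a`: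
for every `ε` with `0 ≪ ε` (i.e. `ε ∈ interior P`) there is `k` such that
`d (x n) a ≪ r + ε` (i.e. `(r + ε) - d (x n) a ∈ interior P`) for all `n ≥ k`. -/
def RConvergent {E : Type*} [NormedAddCommGroup E] [NormedSpace ℝ E] (P : Set E)
    {X : Type*} (d : X → X → E) (r : E) (x : ℕ → X) (a : X) : Prop :=
  ∀ ε : E, ε ∈ interior P → ∃ k : ℕ, ∀ n : ℕ, k ≤ n → (r + ε) - d (x n) a ∈ interior P

/-- The sequence `x` in the cone metric space `(X, d)` is an `r`-Cauchy sequence: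
for every `ε` with `0 ≪ ε` there is `m` such that `d (x i) (x j) ≪ r + ε` for all `i, j ≥ m`. -/
def RCauchy {E : Type*} [NormedAddCommGroup E] [NormedSpace ℝ E] (P : Set E)
    {X : Type*} (d : X → X → E) (r : E) (x : ℕ → X) : Prop :=
  ∀ ε : E, ε ∈ interior P → ∃ m : ℕ, ∀ i j : ℕ, m ≤ i → m ≤ j →
    (r + ε) - d (x i) (x j) ∈ interior P


/-! Put `p = d(xᵢ, yᵢ) - d(xⱼ, yⱼ)` and `c = d(xᵢ, xⱼ) + d(yᵢ, yⱼ)`. Two triangle inequalities give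
`-c ≤ p ≤ c`, so `‖p‖ ≤ k‖c‖` by `(*)`. For large `i, j` both distances in `c` are below
`r/(2k²) + t r` for any small `t > 0`, so normality gives `‖c‖ ≤ k ‖r/k² + 2t r‖`, whence
`‖p‖ ≤ (1 + 2k²t)‖r‖`. -/

section ConeMetric

variable {E : Type*} [NormedAddCommGroup E] [NormedSpace ℝ E] {P : Set E}

theorem IsCone.add_mem (hP : IsCone P) {u v : E} (hu : u ∈ P) (hv : v ∈ P) : u + v ∈ P := by
  simpa using hP.comb_mem 1 1 zero_le_one zero_le_one u v hu hv

theorem IsCone.smul_mem_interior (hP : IsCone P) {t : ℝ} (ht : 0 < t) {r : E}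
    (hr : r ∈ interior P) : t • r ∈ interior P := by
  have hsub : (t • ·) '' interior P ⊆ P := by
    rintro _ ⟨a, ha, rfl⟩
    simpa using hP.comb_mem t 0 ht.le le_rfl a a (interior_subset ha) (interior_subset ha)
  exact interior_maximal hsub ((isOpenMap_smul₀ ht.ne') _ isOpen_interior) ⟨r, hr, rfl⟩

variable {X : Type*} {d : X → X → E}

theorem IsConeMetric.dist_sub_dist_le_add (hP : IsCone P) (hd : IsConeMetric P d)
    (a b a' b' : X) : (d a a' + d b b') - (d a b - d a' b') ∈ P := by
  have h := hP.add_mem (hd.triangle a b a') (hd.triangle a' b b')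
  rw [hd.symm b' b] at h
  convert h using 1
  abel

theorem IsConeMetric.norm_dist_sub_dist_le (hP : IsCone P) (hd : IsConeMetric P d)
    {k : ℝ} (hk : 0 ≤ k) (hnormal : ∀ u v : E, u ∈ P → v - u ∈ P → ‖u‖ ≤ k * ‖v‖)
    (hstar : ∀ p c : E, c ∈ P → c - p ∈ P → c + p ∈ P → ‖p‖ ≤ k * ‖c‖)
    {a b a' b' : X} {w : E} (ha : w - d a a' ∈ P) (hb : w - d b b' ∈ P) :
    ‖d a b - d a' b'‖ ≤ 2 * k ^ 2 * ‖w‖ := by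
  have hc : d a a' + d b b' ∈ P := hP.add_mem (hd.nonneg a a') (hd.nonneg b b')
  have hupper := hd.dist_sub_dist_le_add hP a b a' b'
  have hlower : (d a a' + d b b') + (d a b - d a' b') ∈ P := by
    convert hd.dist_sub_dist_le_add hP a' b' a b using 1
    rw [hd.symm a' a, hd.symm b' b]
    abel
  have hcw : (w + w) - (d a a' + d b b') ∈ P := by
    convert hP.add_mem ha hb using 1
    abel
  calc ‖d a b - d a' b'‖ ≤ k * ‖d a a' + d b b'‖ := hstar _ _ hc hupper hlower
    _ ≤ k * (k * ‖w + w‖) := mul_le_mul_of_nonneg_left (hnormal _ _ hc hcw) hk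
    _ = 2 * k ^ 2 * ‖w‖ := by
      rw [← two_smul ℝ w, norm_smul, Real.norm_two]
      ring

end ConeMetric

theorem norm_dist_rCauchy_general
    {E X : Type*} [NormedAddCommGroup E] [NormedSpace ℝ E]
    (P : Set E) (hP : IsCone P) (d : X → X → E) (hd : IsConeMetric P d)
    (k : ℝ) (hk : 0 < k)
    (hnormal : ∀ u v : E, u ∈ P → v - u ∈ P → ‖u‖ ≤ k * ‖v‖)
    (hstar : ∀ p c : E, c ∈ P → c - p ∈ P → c + p ∈ P → ‖p‖ ≤ k * ‖c‖)
    (r : E) (hr : r ∈ interior P)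
    (x y : ℕ → X)
    (hx : RCauchy P d ((1 / (2 * k ^ 2)) • r) x)
    (hy : RCauchy P d ((1 / (2 * k ^ 2)) • r) y) :
    ∀ ε : ℝ, 0 < ε → ∃ m : ℕ, ∀ i j : ℕ, m ≤ i → m ≤ j →
      ‖d (x i) (y i) - d (x j) (y j)‖ < ‖r‖ + ε := by
  intro ε hε
  set t : ℝ := ε / (2 * k ^ 2 * (‖r‖ + 1))
  have ht : 0 < t := by positivity
  obtain ⟨m₁, hm₁⟩ := hx (t • r) (hP.smul_mem_interior ht hr)
  obtain ⟨m₂, hm₂⟩ := hy (t • r) (hP.smul_mem_interior ht hr)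
  refine ⟨max m₁ m₂, fun i j hi hj => ?_⟩
  have hbound := hd.norm_dist_sub_dist_le hP hk.le hnormal hstar
    (interior_subset (hm₁ i j (le_of_max_le_left hi) (le_of_max_le_left hj)))
    (interior_subset (hm₂ i j (le_of_max_le_right hi) (le_of_max_le_right hj)))
  calc ‖d (x i) (y i) - d (x j) (y j)‖ ≤ 2 * k ^ 2 * ‖(1 / (2 * k ^ 2)) • r + t • r‖ := hbound
    _ = ‖r‖ + ε * (‖r‖ / (‖r‖ + 1)) := by
      rw [← add_smul, norm_smul, Real.norm_of_nonneg (by positivity)]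
      simp only [t]
      field_simp
    _ < ‖r‖ + ε := by
      gcongr
      exact mul_lt_of_lt_one_right hε ((div_lt_one (by positivity)).2 (lt_add_one _))

/-- If `P` is a normal cone with normal constant `k` satisfying condition `(*)`, `0 ≪ r`, and
`(x_n)`, `(y_n)` are `(r/(2k²))`-Cauchy sequences, then `(d (x_n) (y_n))` is `‖r‖`-Cauchy in
norm: for every real `ε > 0` there is `m` with `‖d (x i) (y i) - d (x j) (y j)‖ < ‖r‖ + ε`
for all `i, j ≥ m`. -/
theorem norm_dist_rCauchy
    {E X : Type*} [NormedAddCommGroup E] [NormedSpace ℝ E] [CompleteSpace E] [Nonempty X]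
    (P : Set E) (hP : IsCone P) (d : X → X → E) (hd : IsConeMetric P d)
    (k : ℝ) (hk : 0 < k)
    (hnormal : ∀ u v : E, u ∈ P → v - u ∈ P → ‖u‖ ≤ k * ‖v‖)
    (hstar : ∀ p c : E, c ∈ P → c - p ∈ P → c + p ∈ P → ‖p‖ ≤ k * ‖c‖)
    (r : E) (hr : r ∈ interior P)
    (x y : ℕ → X)
    (hx : RCauchy P d ((1 / (2 * k ^ 2)) • r) x)
    (hy : RCauchy P d ((1 / (2 * k ^ 2)) • r) y) :
    ∀ ε : ℝ, 0 < ε → ∃ m : ℕ, ∀ i j : ℕ, m ≤ i → m ≤ j →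
      ‖d (x i) (y i) - d (x j) (y j)‖ < ‖r‖ + ε :=
  norm_dist_rCauchy_general P hP d hd k hk hnormal hstar r hr x y hx hy
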